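/- The plane curve germ at the origin defined by x(z² − x³ + xz²) = t·z³ in coordinates (x,z) has Milnor number 5 (it is a D₅ singularity) for every value of the parameter t ∈ ℂ. -/

import Mathlib

open MvPolynomial in
/-- The Milnor number of an isolated plane curve singularity germ `g` at the origin:
the dimension over `ℂ` of the quotient of the formal power series ring `ℂ[[x,z]]`
(playing the role of the local ring `ℂ{x,z}`) by the Jacobian ideal `(∂g/∂x, ∂g/∂z)`. -/
noncomputable def milnor (g : MvPolynomial (Fin 2) ℂ) : ℕ :=
  Module.finrank ℂ
    ((MvPowerSeries (Fin 2) ℂ) ⧸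
      Ideal.span {(↑(pderiv 0 g) : MvPowerSeries (Fin 2) ℂ),
                  (↑(pderiv 1 g) : MvPowerSeries (Fin 2) ℂ)})

namespace Stmt4

open MvPowerSeries Finsupp

abbrev PS := MvPowerSeries (Fin 2) ℂ

noncomputable def xx : PS := MvPowerSeries.X 0
noncomputable def zz : PS := MvPowerSeries.X 1
noncomputable def ct (t : ℂ) : PS := MvPowerSeries.C t

noncomputable def A : PS := zz^2 + 2*xx*zz^2 - 4*xx^3
noncomputable def B (t : ℂ) : PS := 2*xx*zz + 2*xx^2*zz - 3*ct t*zz^2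

noncomputable def Ide (t : ℂ) : Ideal PS := Ideal.span {A, B t}

lemma isUnit_aux (f : PS) (h : MvPowerSeries.constantCoeff f ≠ 0) : IsUnit f :=
  isUnit_iff_constantCoeff.mpr h.isUnit

section
variable (t : ℂ)

local notation "π" => Ideal.Quotient.mk (Ide t)

lemma cancel {y : PS ⧸ Ide t} {w : PS} (hw : IsUnit w) (h : π w * y = 0) : y = 0 := by
  obtain ⟨u, hu⟩ := hw.map π
  have : (↑u⁻¹ : PS ⧸ Ide t) * (↑u * y) = y := by rw [← mul_assoc, u.inv_mul, one_mul]
  rw [hu, h, mul_zero] at this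
  exact this.symm

lemma hA : π A = 0 :=
  Ideal.Quotient.eq_zero_iff_mem.mpr (Ideal.subset_span (by simp))

lemma hB : π (B t) = 0 :=
  Ideal.Quotient.eq_zero_iff_mem.mpr (Ideal.subset_span (by simp))

lemma E1 : (1 + 2*(π xx)) * (π zz)^2 = 4*(π xx)^3 := by
  have h := hA t
  rw [A] at h
  simp only [map_add, map_sub, map_mul, map_pow, map_ofNat] at h
  linear_combination h

lemma E2 : 2*(π xx)*(π zz) + 2*(π xx)^2*(π zz) = 3*(π (ct t))*(π zz)^2 := by
  have h := hB t
  rw [B] at h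
  simp only [map_add, map_sub, map_mul, map_pow, map_ofNat] at h
  linear_combination h

lemma q_x4 : (π xx)^4 = 0 := by
  set ξ := π xx; set ζ := π zz; set τ := π (ct t)
  have s1 : 2*(1+ξ)*(1+2*ξ)*(ξ*ζ^2) = 12*τ*(ξ^3*ζ) := by
    linear_combination ((1+2*ξ)*ζ)*(E2 t) + (3*τ*ζ)*(E1 t)
  have s2 : 2*(1+ξ)*(1+2*ξ)*(ξ^3*ζ) = 12*τ*ξ^5 := by
    linear_combination ((1+2*ξ)*ξ^2)*(E2 t) + (3*τ*ξ^2)*(E1 t)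
  have s3 : 8*(1+ξ)*ξ^4 = 12*τ*(ξ^3*ζ) := by
    linear_combination s1 - (2*(1+ξ)*ξ)*(E1 t)
  refine cancel t (w := 16*(1+2*xx)*(1+xx)^2 - 144*(ct t)^2*xx) (isUnit_aux _ ?_) ?_
  · simp [xx, zz, ct, map_ofNat]
  · simp only [map_mul, map_add, map_sub, map_pow, map_ofNat, map_one]
    linear_combination (2*(1+ξ)*(1+2*ξ))*s3 + 12*τ*s2

lemma q_x3z : (π xx)^3 * (π zz) = 0 := by
  set ξ := π xx; set ζ := π zz; set τ := π (ct t)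
  have s2 : 2*(1+ξ)*(1+2*ξ)*(ξ^3*ζ) = 12*τ*ξ^5 := by
    linear_combination ((1+2*ξ)*ξ^2)*(E2 t) + (3*τ*ξ^2)*(E1 t)
  refine cancel t (w := 2*(1+xx)*(1+2*xx)) (isUnit_aux _ ?_) ?_
  · simp [xx, zz, ct, map_ofNat]
  · simp only [map_mul, map_add, map_ofNat, map_one]
    linear_combination s2 + 12*τ*ξ*(q_x4 t)

lemma q_xz2 : (π xx) * (π zz)^2 = 0 := by
  set ξ := π xx; set ζ := π zz; set τ := π (ct t)
  have s1 : 2*(1+ξ)*(1+2*ξ)*(ξ*ζ^2) = 12*τ*(ξ^3*ζ) := by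
    linear_combination ((1+2*ξ)*ζ)*(E2 t) + (3*τ*ζ)*(E1 t)
  refine cancel t (w := 2*(1+xx)*(1+2*xx)) (isUnit_aux _ ?_) ?_
  · simp [xx, zz, ct, map_ofNat]
  · simp only [map_mul, map_add, map_ofNat, map_one]
    linear_combination s1 + 12*τ*(q_x3z t)

lemma q_z3 : (π zz)^3 = 0 := by
  set ξ := π xx; set ζ := π zz
  refine cancel t (w := 1+2*xx) (isUnit_aux _ ?_) ?_
  · simp [xx, map_ofNat]
  · simp only [map_mul, map_add, map_ofNat, map_one]
    linear_combination ζ*(E1 t) + 4*(q_x3z t)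

lemma q_x2z : (π xx)^2 * (π zz) = 0 := by
  set ξ := π xx; set ζ := π zz; set τ := π (ct t)
  refine cancel t (w := 2*(1+xx)) (isUnit_aux _ ?_) ?_
  · simp [xx, map_ofNat]
  · simp only [map_mul, map_add, map_ofNat, map_one]
    linear_combination ξ*(E2 t) + 3*τ*(q_xz2 t)

lemma q_z2 : (π zz)^2 - 4*(π xx)^3 = 0 := by
  refine cancel t (w := 1+2*xx) (isUnit_aux _ ?_) ?_
  · simp [xx, map_ofNat]
  · simp only [map_mul, map_add, map_ofNat, map_one]
    linear_combination (E1 t) - 8*(q_x4 t)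

lemma q_xz : (π xx)*(π zz) - 6*(π (ct t))*(π xx)^3 = 0 := by
  set τ := π (ct t)
  refine cancel t (w := 2*(1+xx)) (isUnit_aux _ ?_) ?_
  · simp [xx, map_ofNat]
  · simp only [map_mul, map_add, map_ofNat, map_one]
    linear_combination (E2 t) + 3*τ*(q_z2 t) - 12*τ*(q_x4 t)

-- memberships
lemma mem_x4 : xx^4 ∈ Ide t :=
  Ideal.Quotient.eq_zero_iff_mem.mp (by simpa only [map_pow] using q_x4 t)

lemma mem_x3z : xx^3*zz ∈ Ide t :=
  Ideal.Quotient.eq_zero_iff_mem.mp (by simpa only [map_mul, map_pow] using q_x3z t)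

lemma mem_x2z : xx^2*zz ∈ Ide t :=
  Ideal.Quotient.eq_zero_iff_mem.mp (by simpa only [map_mul, map_pow] using q_x2z t)

lemma mem_xz2 : xx*zz^2 ∈ Ide t :=
  Ideal.Quotient.eq_zero_iff_mem.mp (by simpa only [map_mul, map_pow] using q_xz2 t)

lemma mem_z3 : zz^3 ∈ Ide t :=
  Ideal.Quotient.eq_zero_iff_mem.mp (by simpa only [map_pow] using q_z3 t)

lemma mem_z2 : zz^2 - 4*xx^3 ∈ Ide t :=
  Ideal.Quotient.eq_zero_iff_mem.mp
    (by simpa only [map_sub, map_mul, map_pow, map_ofNat] using q_z2 t)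

lemma mem_xz : xx*zz - 6*ct t*xx^3 ∈ Ide t :=
  Ideal.Quotient.eq_zero_iff_mem.mp
    (by simpa only [map_sub, map_mul, map_pow, map_ofNat] using q_xz t)

end

/-- split a power series as constant + x*g + z*h -/
lemma exists_decomp (f : PS) : ∃ g h : PS,
    f = MvPowerSeries.C (MvPowerSeries.constantCoeff f) + xx * g + zz * h := by
  classical
  refine ⟨@id PS (fun e => MvPowerSeries.coeff (e + single 0 1) f),
    @id PS (fun e => if e 0 = 0 then MvPowerSeries.coeff (e + single 1 1) f else 0), ?_⟩
  ext e
  rw [map_add, map_add, xx, zz, X_def, X_def, coeff_monomial_mul, coeff_monomial_mul, coeff_C]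
  have hc : ∀ (g : (Fin 2 →₀ ℕ) → ℂ) d, MvPowerSeries.coeff d (@id PS g) = g d := fun _ _ => rfl
  simp only [hc]
  rcases Nat.eq_zero_or_pos (e 0) with h0 | h0
  · rcases Nat.eq_zero_or_pos (e 1) with h1 | h1
    · have he : e = 0 := by ext i; fin_cases i <;> simpa
      subst he
      rw [if_pos rfl]
      have n0 : ¬ single (0:Fin 2) 1 ≤ (0 : Fin 2 →₀ ℕ) := by simp [single_le_iff]
      have n1 : ¬ single (1:Fin 2) 1 ≤ (0 : Fin 2 →₀ ℕ) := by simp [single_le_iff]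
      rw [if_neg n0, if_neg n1, ← coeff_zero_eq_constantCoeff_apply, coeff_apply]
      ring
    · have hle : single 1 1 ≤ e := by rwa [single_le_iff]
      have hnle : ¬ single 0 1 ≤ e := by rw [single_le_iff]; omega
      have hne : ¬ e = 0 := by intro h; rw [h] at h1; simp at h1
      rw [if_neg hne, if_neg hnle, if_pos hle]
      have h0' : (e - single (1:Fin 2) 1 : Fin 2 →₀ ℕ) 0 = 0 := by rw [tsub_apply]; simpa
      rw [if_pos h0', tsub_add_cancel_of_le hle]
      ring
  · have hle : single 0 1 ≤ e := by rwa [single_le_iff]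
    have hne : ¬ e = 0 := by intro h; rw [h] at h0; simp at h0
    rw [if_neg hne, if_pos hle, tsub_add_cancel_of_le hle]
    rcases Nat.eq_zero_or_pos (e 1) with h1 | h1
    · have hnle : ¬ single 1 1 ≤ e := by rw [single_le_iff]; omega
      rw [if_neg hnle]; ring
    · have hle1 : single 1 1 ≤ e := by rwa [single_le_iff]
      rw [if_pos hle1]
      have h0' : (e - single (1:Fin 2) 1 : Fin 2 →₀ ℕ) 0 ≠ 0 := by rw [tsub_apply]; simp; omega
      rw [if_neg h0']; ring


section
variable (t : ℂ)

noncomputable def CC (c : ℂ) : PS := MvPowerSeries.C c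

lemma exists_decomp'' (f : PS) : ∃ c : ℂ, ∃ g h : PS, f = CC c + xx * g + zz * h := by
  obtain ⟨g, h, hf⟩ := exists_decomp f
  exact ⟨_, g, h, hf⟩

lemma K_x3 (f : PS) : ∃ c : ℂ, xx^3 * f - CC c * xx^3 ∈ Ide t := by
  obtain ⟨c, g, h, hf⟩ := exists_decomp'' f
  refine ⟨c, ?_⟩
  have key : xx^3 * f - CC c * xx^3 = xx^4 * g + (xx^3*zz) * h := by rw [hf]; ring
  rw [key]
  exact Ideal.add_mem _ (Ideal.mul_mem_right _ _ (mem_x4 t)) (Ideal.mul_mem_right _ _ (mem_x3z t))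

lemma K_xz (f : PS) : ∃ c : ℂ, xx*zz * f - CC c * xx^3 ∈ Ide t := by
  obtain ⟨c, g, h, hf⟩ := exists_decomp'' f
  refine ⟨6*t*c, ?_⟩
  have hc : CC (6*t*c) = 6 * ct t * CC c := by simp [CC, ct, map_mul, map_ofNat]
  have key : xx*zz * f - CC (6*t*c) * xx^3 =
      CC c * (xx*zz - 6*ct t*xx^3) + (xx^2*zz) * g + (xx*zz^2) * h := by
    rw [hf, hc]; ring
  rw [key]
  exact Ideal.add_mem _ (Ideal.add_mem _ (Ideal.mul_mem_left _ _ (mem_xz t))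
    (Ideal.mul_mem_right _ _ (mem_x2z t))) (Ideal.mul_mem_right _ _ (mem_xz2 t))

lemma K_z2 (f : PS) : ∃ c : ℂ, zz^2 * f - CC c * xx^3 ∈ Ide t := by
  obtain ⟨c, g, h, hf⟩ := exists_decomp'' f
  refine ⟨4*c, ?_⟩
  have hc : CC (4*c) = 4 * CC c := by simp [CC, map_mul, map_ofNat]
  have key : zz^2 * f - CC (4*c) * xx^3 =
      CC c * (zz^2 - 4*xx^3) + (xx*zz^2) * g + zz^3 * h := by
    rw [hf, hc]; ring
  rw [key]
  exact Ideal.add_mem _ (Ideal.add_mem _ (Ideal.mul_mem_left _ _ (mem_z2 t))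
    (Ideal.mul_mem_right _ _ (mem_xz2 t))) (Ideal.mul_mem_right _ _ (mem_z3 t))

lemma reduce (f : PS) : ∃ c : Fin 5 → ℂ,
    f - (CC (c 0) + CC (c 1)*xx + CC (c 2)*zz + CC (c 3)*xx^2 + CC (c 4)*xx^3) ∈ Ide t := by
  obtain ⟨c0, g, h, hf⟩ := exists_decomp'' f
  obtain ⟨c1, g', h', hg⟩ := exists_decomp'' g
  obtain ⟨c2, g'', h'', hh⟩ := exists_decomp'' h
  obtain ⟨c3, g3, h3, hg'⟩ := exists_decomp'' g'
  obtain ⟨d1, k1⟩ := K_x3 t g3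
  obtain ⟨d2, k2⟩ := K_xz t h'
  obtain ⟨d3, k3⟩ := K_xz t g''
  obtain ⟨d4, k4⟩ := K_z2 t h''
  refine ⟨![c0, c1, c2, c3, d1+d2+d3+d4], ?_⟩
  have hc : CC (d1+d2+d3+d4) = CC d1 + CC d2 + CC d3 + CC d4 := by simp [CC]
  have key : f - (CC c0 + CC c1*xx + CC c2*zz + CC c3*xx^2 + CC (d1+d2+d3+d4)*xx^3) =
      (xx^3 * g3 - CC d1 * xx^3) + (xx*zz * h' - CC d2 * xx^3) +
      (xx*zz * g'' - CC d3 * xx^3) + (zz^2 * h'' - CC d4 * xx^3) +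
      (xx^2*zz) * h3 := by
    rw [hf, hg, hh, hg', hc]; ring
  simp only [Matrix.cons_val_zero, Matrix.cons_val_one, Matrix.head_cons,
    Matrix.cons_val_two, Matrix.tail_cons, Matrix.cons_val_three, Matrix.cons_val_four]
  rw [key]
  exact Ideal.add_mem _ (Ideal.add_mem _ (Ideal.add_mem _ (Ideal.add_mem _ k1 k2) k3) k4)
    (Ideal.mul_mem_right _ _ (mem_x2z t))

end
noncomputable def bas : Fin 5 → PS := ![1, xx, zz, xx^2, xx^3]

noncomputable def lam (t : ℂ) : Fin 5 → (PS →ₗ[ℂ] ℂ) :=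
  ![MvPowerSeries.coeff 0,
    MvPowerSeries.coeff (single 0 1),
    MvPowerSeries.coeff (single 1 1),
    MvPowerSeries.coeff (single 0 2),
    MvPowerSeries.coeff (single 0 3) + (4:ℂ) • MvPowerSeries.coeff (single 1 2)
      + (6*t) • MvPowerSeries.coeff (single 0 1 + single 1 1)]

lemma two_mon (e : Fin 2 →₀ ℕ) (c : ℂ) :
    (monomial e c : PS) = MvPowerSeries.C c * monomial e 1 := by
  rw [← monomial_zero_eq_C_apply, monomial_mul_monomial]
  simp

lemma mon_split (i j : ℕ) : (monomial (single 0 i + single 1 j) (1:ℂ) : PS) = xx^i * zz^j := by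
  rw [xx, zz, X_pow_eq, X_pow_eq, monomial_mul_monomial, one_mul]

lemma mon_x (i : ℕ) : (monomial (single 0 i) (1:ℂ) : PS) = xx^i := by rw [xx, X_pow_eq]
lemma mon_z (j : ℕ) : (monomial (single 1 j) (1:ℂ) : PS) = zz^j := by rw [zz, X_pow_eq]

lemma A_eq : A = (monomial (single 1 2) 1 : PS)
    + monomial (single 0 1 + single 1 2) 2 + monomial (single 0 3) (-4) := by
  have h1 : (monomial (single 1 2) (1:ℂ) : PS) = zz^2 := mon_z 2
  have h2 : (monomial (single 0 1 + single 1 2) (2:ℂ) : PS) = 2 * (xx^1 * zz^2) := by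
    rw [two_mon, mon_split]; norm_num [map_ofNat]
  have h3 : (monomial (single 0 3) (-4:ℂ) : PS) = -(4 * xx^3) := by
    rw [two_mon, mon_x]; simp [map_ofNat]
  rw [A, h1, h2, h3]; ring

lemma B_eq (t : ℂ) : B t = (monomial (single 0 1 + single 1 1) 2 : PS)
    + monomial (single 0 2 + single 1 1) 2 + monomial (single 1 2) (-(3*t)) := by
  have h1 : (monomial (single 0 1 + single 1 1) (2:ℂ) : PS) = 2 * (xx^1 * zz^1) := by
    rw [two_mon, mon_split]; norm_num [map_ofNat]
  have h2 : (monomial (single 0 2 + single 1 1) (2:ℂ) : PS) = 2 * (xx^2 * zz^1) := by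
    rw [two_mon, mon_split]; norm_num [map_ofNat]
  have h3 : (monomial (single 1 2) (-(3*t)) : PS) = -(3 * ct t * zz^2) := by
    rw [two_mon, mon_z, ct]; simp [map_ofNat]
  rw [B, h1, h2, h3]; ring

lemma constCoeff_mon (e : Fin 2 →₀ ℕ) (c : ℂ) :
    MvPowerSeries.constantCoeff (monomial e c) = if (0 : Fin 2 →₀ ℕ) = e then c else 0 := by
  rw [← coeff_zero_eq_constantCoeff_apply, coeff_monomial]

lemma vanish_aux (t : ℂ) (p q : PS) (i : Fin 5) :
    lam t i (p * A + q * B t) = 0 := by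
  rw [A_eq, B_eq]
  fin_cases i <;>
    simp [lam, mul_add, coeff_mul_monomial, constCoeff_mon, Finsupp.le_def, Finsupp.single_apply,
      Finsupp.add_apply, Fin.forall_fin_two, Fin.exists_fin_two, Finsupp.ext_iff] <;>
    ring

lemma pair (t : ℂ) (i j : Fin 5) : lam t i (bas j) = if i = j then 1 else 0 := by
  fin_cases i <;> fin_cases j <;>
    simp [lam, bas, xx, zz, coeff_one, coeff_X, coeff_X_pow, Finsupp.single_apply,
      Finsupp.add_apply, Fin.forall_fin_two, Fin.exists_fin_two, Finsupp.ext_iff,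
      Finsupp.single_eq_zero]


section
variable (t : ℂ)

lemma vanish (f : PS) (hf : f ∈ Ide t) (i : Fin 5) : lam t i f = 0 := by
  rw [Ide, Ideal.mem_span_pair] at hf
  obtain ⟨p, q, hpq⟩ := hf
  rw [← hpq]
  exact vanish_aux t p q i

lemma smul_mk (c : ℂ) (w : PS) :
    Ideal.Quotient.mk (Ide t) (CC c * w) = c • Ideal.Quotient.mk (Ide t) w := by
  have h1 : CC c * w = c • w := by rw [CC, c_eq_algebraMap, ← Algebra.smul_def]
  have h2 := map_smul (Ideal.Quotient.mkₐ ℂ (Ide t)).toLinearMap c w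
  simp only [AlgHom.toLinearMap_apply, Ideal.Quotient.mkₐ_eq_mk] at h2
  rw [h1, h2]

lemma main : Module.finrank ℂ (PS ⧸ Ide t) = 5 := by
  classical
  set v : Fin 5 → PS ⧸ Ide t := fun i => Ideal.Quotient.mk (Ide t) (bas i) with hv
  have hind : LinearIndependent ℂ v := by
    rw [Fintype.linearIndependent_iff]
    intro c hc j
    have hmem : (∑ i, CC (c i) * bas i) ∈ Ide t := by
      rw [← Ideal.Quotient.eq_zero_iff_mem, map_sum]
      rw [Finset.sum_congr rfl fun i _ => smul_mk t (c i) (bas i)]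
      exact hc
    have h2 := vanish t _ hmem j
    rw [map_sum] at h2
    have h3 : ∀ i, lam t j (CC (c i) * bas i) = c i * (if j = i then 1 else 0) := by
      intro i
      have h1 : CC (c i) * bas i = c i • bas i := by rw [CC, c_eq_algebraMap, ← Algebra.smul_def]
      rw [h1, map_smul, pair]
      simp
    rw [Finset.sum_congr rfl fun i _ => h3 i] at h2
    simpa using h2
  have hspan : ⊤ ≤ Submodule.span ℂ (Set.range v) := by
    rintro y -
    obtain ⟨f, rfl⟩ := Ideal.Quotient.mk_surjective y
    obtain ⟨c, hc⟩ := reduce t f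
    rw [← Ideal.Quotient.mk_eq_mk_iff_sub_mem] at hc
    have hb : (CC (c 0) + CC (c 1)*xx + CC (c 2)*zz + CC (c 3)*xx^2 + CC (c 4)*xx^3)
        = CC (c 0)*bas 0 + CC (c 1)*bas 1 + CC (c 2)*bas 2 + CC (c 3)*bas 3 + CC (c 4)*bas 4 := by
      simp [bas]
    have h2 : Ideal.Quotient.mk (Ide t) f = ∑ i, c i • v i := by
      rw [hc, hb, map_add, map_add, map_add, map_add,
        smul_mk, smul_mk, smul_mk, smul_mk, smul_mk, Fin.sum_univ_five]
    rw [h2]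
    exact Submodule.sum_mem _ fun i _ =>
      Submodule.smul_mem _ _ (Submodule.subset_span ⟨i, rfl⟩)
  let b : Module.Basis (Fin 5) ℂ (PS ⧸ Ide t) := Module.Basis.mk hind hspan
  rw [Module.finrank_eq_card_basis b, Fintype.card_fin]

end
end Stmt4

namespace Stmt4

lemma coe_two : ((2 : MvPolynomial (Fin 2) ℂ) : PS) = 2 := by
  rw [← map_ofNat (MvPolynomial.C : ℂ →+* MvPolynomial (Fin 2) ℂ) 2, MvPolynomial.coe_C, map_ofNat]

lemma coe_three : ((3 : MvPolynomial (Fin 2) ℂ) : PS) = 3 := by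
  rw [← map_ofNat (MvPolynomial.C : ℂ →+* MvPolynomial (Fin 2) ℂ) 3, MvPolynomial.coe_C, map_ofNat]

lemma coe_four : ((4 : MvPolynomial (Fin 2) ℂ) : PS) = 4 := by
  rw [← map_ofNat (MvPolynomial.C : ℂ →+* MvPolynomial (Fin 2) ℂ) 4, MvPolynomial.coe_C, map_ofNat]

lemma coe_sub' (p q : MvPolynomial (Fin 2) ℂ) : ((p - q : MvPolynomial (Fin 2) ℂ) : PS) = ↑p - ↑q :=
  MvPowerSeries.ext fun n => by simp [MvPolynomial.coeff_sub]

end Stmt4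

open MvPolynomial in
/-- the plane curve germ `x(z² − x³ + xz²) = t·z³` at the origin has
Milnor number 5 (a `D₅` singularity) for every t ∈ ℂ. Here variable `X 0 = x`,
`X 1 = z`. -/
theorem stmt_4 (t : ℂ) :
    milnor (X 0 * ((X 1) ^ 2 - (X 0) ^ 3 + X 0 * (X 1) ^ 2) - C t * (X 1) ^ 3) = 5 := by
  have hp0 : pderiv 0 (X 0 * ((X 1) ^ 2 - (X 0) ^ 3 + X 0 * (X 1) ^ 2) - C t * (X 1) ^ 3
        : MvPolynomial (Fin 2) ℂ)
      = (X 1)^2 + 2*X 0*(X 1)^2 - 4*(X 0)^3 := by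
    simp [pderiv_mul, pderiv_pow, pderiv_X_self, pderiv_X_of_ne, pderiv_C]
    ring
  have hp1 : pderiv 1 (X 0 * ((X 1) ^ 2 - (X 0) ^ 3 + X 0 * (X 1) ^ 2) - C t * (X 1) ^ 3
        : MvPolynomial (Fin 2) ℂ)
      = 2*X 0*X 1 + 2*(X 0)^2*X 1 - 3*C t*(X 1)^2 := by
    simp [pderiv_mul, pderiv_pow, pderiv_X_self, pderiv_X_of_ne, pderiv_C]
    ring
  have h0 : (↑(pderiv 0 (X 0 * ((X 1) ^ 2 - (X 0) ^ 3 + X 0 * (X 1) ^ 2) - C t * (X 1) ^ 3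
      : MvPolynomial (Fin 2) ℂ)) : MvPowerSeries (Fin 2) ℂ) = Stmt4.A := by
    rw [hp0, Stmt4.A, Stmt4.xx, Stmt4.zz]
    push_cast [Stmt4.coe_sub', Stmt4.coe_two, Stmt4.coe_four]
    ring
  have h1 : (↑(pderiv 1 (X 0 * ((X 1) ^ 2 - (X 0) ^ 3 + X 0 * (X 1) ^ 2) - C t * (X 1) ^ 3
      : MvPolynomial (Fin 2) ℂ)) : MvPowerSeries (Fin 2) ℂ) = Stmt4.B t := by
    rw [hp1, Stmt4.B, Stmt4.xx, Stmt4.zz, Stmt4.ct]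
    push_cast [Stmt4.coe_sub', Stmt4.coe_two, Stmt4.coe_three]
    ring
  unfold milnor
  rw [h0, h1]
  exact Stmt4.main t
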